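/- Let H = [H_X | O] be an m×2n matrix over 𝔽₂ of full row rank m whose last n columns are zero, let s ∈ 𝔽₂^m, and let ε be a real number with 0 < ε ≤ 3/4 and (ε/3)/(1−ε) < 2^{−m}. For w ∈ 𝔽₂^{2n}, set α_w = ∑_{u ∈ w + Row(H)} (ε/3)^{gw(u)} (1−ε)^{n−gw(u)}. Suppose v = (x|z) satisfies v Λ Hᵀ = s and maximizes α_w among all w with w Λ Hᵀ = s. Then e' := (0|z) satisfies e' Λ Hᵀ = s and gw(e') = min{gw(u) : u ∈ 𝔽₂^{2n}, u Λ Hᵀ = s}; i.e., e' is a maximum-likelihood solution. -/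

import Mathlib

open Matrix Finset

/-- The `2n × 2n` symplectic form matrix `Λ = [[O,I],[I,O]]` over `𝔽₂`. -/
def Lam (n : ℕ) : Matrix (Fin n ⊕ Fin n) (Fin n ⊕ Fin n) (ZMod 2) :=
  Matrix.fromBlocks 0 1 1 0

/-- The syndrome `e Λ Hᵀ ∈ 𝔽₂^m` of `e ∈ 𝔽₂^{2n}` with respect to `H`. -/
def syndrome {m n : ℕ} (H : Matrix (Fin m) (Fin n ⊕ Fin n) (ZMod 2))
    (e : Fin n ⊕ Fin n → ZMod 2) : Fin m → ZMod 2 :=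
  Matrix.vecMul (Matrix.vecMul e (Lam n)) Hᵀ

/-- Generalized weight of `(x|z)`: `w_H(x) + w_H(z) − w_H(x∧z)`. -/
def gw {n : ℕ} (x z : Fin n → ZMod 2) : ℕ :=
  hammingNorm x + hammingNorm z - hammingNorm (x * z)

/-- Generalized weight of a full vector `e = (x|z) ∈ 𝔽₂^{2n}`. -/
def gwFull {n : ℕ} (e : Fin n ⊕ Fin n → ZMod 2) : ℕ :=
  gw (fun j => e (Sum.inl j)) (fun j => e (Sum.inr j))

/-- The coset `v + Row(H)` of the row space of `H`, as a finite set. -/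
def cosetF {m n : ℕ} (H : Matrix (Fin m) (Fin n ⊕ Fin n) (ZMod 2))
    (v : Fin n ⊕ Fin n → ZMod 2) : Finset (Fin n ⊕ Fin n → ZMod 2) :=
  Finset.image (fun c : Fin m → ZMod 2 => v + Matrix.vecMul c H) Finset.univ

/-- The coset probability `α_w = ∑_{u ∈ w + Row(H)} (ε/3)^{gw(u)} (1−ε)^{n−gw(u)}`. -/
noncomputable def alpha {m n : ℕ} (H : Matrix (Fin m) (Fin n ⊕ Fin n) (ZMod 2))
    (ε : ℝ) (w : Fin n ⊕ Fin n → ZMod 2) : ℝ :=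
  ∑ u ∈ cosetF H w, (ε / 3) ^ gwFull u * (1 - ε) ^ (n - gwFull u)

/-!
Since the `Z`-block of `H` vanishes, the syndrome of `(x|z)` depends on `z` alone and every
element of the coset `(x|z) + Row(H)` has `Z`-part `z`, hence generalized weight at least
`|z|`. With `ρ = (ε/3)/(1−ε)` each term of `α_w` is `(1−ε)^n ρ^{gw(u)}`, and `ε ≤ 3/4` means
`ρ ≤ 1`. If some solution `u` had `Z`-part of weight `d < |z|`, then `(0|z_u)` would be a
solution with `α ≥ (1−ε)^n ρ^d`, while the coset of `(x|z)` has at most `2^m` elements, so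
`α_{(x|z)} ≤ 2^m (1−ε)^n ρ^{d+1} < (1−ε)^n ρ^d`, contradicting the maximality of `(x|z)`.
-/

lemma vecMul_Lam {n : ℕ} (e : Fin n ⊕ Fin n → ZMod 2) : e ᵥ* Lam n = e ∘ Sum.swap := by
  funext k
  cases k <;> simp [vecMul, dotProduct, Lam, fromBlocks, Fintype.sum_sum_type, one_apply]

section ZeroZBlock

variable {m n : ℕ} {H : Matrix (Fin m) (Fin n ⊕ Fin n) (ZMod 2)}

lemma syndrome_congr_inr (hO : ∀ i j, H i (Sum.inr j) = 0) {e e' : Fin n ⊕ Fin n → ZMod 2}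
    (h : ∀ j, e (Sum.inr j) = e' (Sum.inr j)) : syndrome H e = syndrome H e' := by
  funext i
  simp only [syndrome, vecMul_Lam]
  simp [vecMul, dotProduct, Fintype.sum_sum_type, hO, h]

lemma inr_eq_of_mem_cosetF (hO : ∀ i j, H i (Sum.inr j) = 0) {v u : Fin n ⊕ Fin n → ZMod 2}
    (hu : u ∈ cosetF H v) (j : Fin n) : u (Sum.inr j) = v (Sum.inr j) := by
  obtain ⟨c, -, rfl⟩ := Finset.mem_image.mp hu
  simp [vecMul, dotProduct, hO]

end ZeroZBlock

section Coset

variable {m n : ℕ} (H : Matrix (Fin m) (Fin n ⊕ Fin n) (ZMod 2)) (v : Fin n ⊕ Fin n → ZMod 2)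

lemma self_mem_cosetF : v ∈ cosetF H v :=
  Finset.mem_image.mpr ⟨0, Finset.mem_univ _, by simp⟩

lemma card_cosetF_le : #(cosetF H v) ≤ 2 ^ m :=
  Finset.card_image_le.trans (by simp)

end Coset

section GeneralizedWeight

variable {n : ℕ} (x z : Fin n → ZMod 2)

lemma gw_eq_card_filter_or : gw x z = #{i | x i ≠ 0 ∨ z i ≠ 0} := by
  have h := card_union_add_card_inter {i | x i ≠ 0} {i | z i ≠ 0}
  rw [← filter_or, ← filter_and] at h
  simp only [gw, hammingNorm, Pi.mul_apply, ne_eq, mul_eq_zero, not_or] at h ⊢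
  omega

lemma gw_le : gw x z ≤ n := by
  simpa [gw_eq_card_filter_or] using card_le_univ (s := ({i | x i ≠ 0 ∨ z i ≠ 0} : Finset _))

lemma hammingNorm_le_gw : hammingNorm z ≤ gw x z := by
  rw [gw_eq_card_filter_or]
  exact card_le_card (monotone_filter_right _ fun _ _ => Or.inr)

@[simp]
lemma gw_zero_left : gw 0 z = hammingNorm z := by
  simp [gw]

end GeneralizedWeight

@[simp]
lemma gwFull_elim_zero_left {n : ℕ} (z : Fin n → ZMod 2) :
    gwFull (Sum.elim (0 : Fin n → ZMod 2) z) = hammingNorm z :=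
  gw_zero_left z

lemma hammingNorm_inr_le_gwFull {n : ℕ} (e : Fin n ⊕ Fin n → ZMod 2) :
    hammingNorm (fun j => e (Sum.inr j)) ≤ gwFull e :=
  hammingNorm_le_gw _ _

noncomputable def cosetWeight {m n : ℕ} (H : Matrix (Fin m) (Fin n ⊕ Fin n) (ZMod 2)) (ρ : ℝ)
    (w : Fin n ⊕ Fin n → ZMod 2) : ℝ :=
  ∑ u ∈ cosetF H w, ρ ^ gwFull u

lemma pow_mul_pow_sub_eq {K : Type*} [Field K] {a b : K} (hb : b ≠ 0) {t n : ℕ} (ht : t ≤ n) :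
    a ^ t * b ^ (n - t) = b ^ n * (a / b) ^ t := by
  rw [pow_sub₀ b hb ht, div_pow]
  field_simp

section CosetWeight

variable {m n : ℕ} (H : Matrix (Fin m) (Fin n ⊕ Fin n) (ZMod 2)) {ρ : ℝ}

lemma alpha_eq_mul_cosetWeight {ε : ℝ} (hε : 1 - ε ≠ 0) (w : Fin n ⊕ Fin n → ZMod 2) :
    alpha H ε w = (1 - ε) ^ n * cosetWeight H (ε / 3 / (1 - ε)) w := by
  rw [alpha, cosetWeight, mul_sum]
  exact sum_congr rfl fun u _ => pow_mul_pow_sub_eq hε (gw_le _ _)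

lemma pow_gwFull_le_cosetWeight (hρ : 0 ≤ ρ) (w : Fin n ⊕ Fin n → ZMod 2) :
    ρ ^ gwFull w ≤ cosetWeight H ρ w :=
  single_le_sum (f := fun u => ρ ^ gwFull u) (fun _ _ => by positivity) (self_mem_cosetF H w)

lemma cosetWeight_le (hρ0 : 0 ≤ ρ) (hρ1 : ρ ≤ 1) {w : Fin n ⊕ Fin n → ZMod 2} {k : ℕ}
    (hk : ∀ u ∈ cosetF H w, k ≤ gwFull u) : cosetWeight H ρ w ≤ 2 ^ m * ρ ^ k :=
  calc cosetWeight H ρ w ≤ #(cosetF H w) • ρ ^ k :=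
        sum_le_card_nsmul _ _ _ fun u hu => pow_le_pow_of_le_one hρ0 hρ1 (hk u hu)
    _ ≤ 2 ^ m * ρ ^ k := by
        rw [nsmul_eq_mul]
        gcongr
        exact_mod_cast card_cosetF_le H w

lemma hammingNorm_le_gwFull_of_forall_cosetWeight_le (hO : ∀ i j, H i (Sum.inr j) = 0)
    (hρ0 : 0 < ρ) (hρ1 : ρ ≤ 1) (hρm : 2 ^ m * ρ < 1) {s : Fin m → ZMod 2}
    {x z : Fin n → ZMod 2}
    (hmax : ∀ w, syndrome H w = s → cosetWeight H ρ w ≤ cosetWeight H ρ (Sum.elim x z))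
    {u : Fin n ⊕ Fin n → ZMod 2} (hu : syndrome H u = s) : hammingNorm z ≤ gwFull u := by
  set z' : Fin n → ZMod 2 := fun j => u (Sum.inr j)
  refine le_trans ?_ (hammingNorm_inr_le_gwFull u)
  by_contra! hlt
  have hs' : syndrome H (Sum.elim 0 z') = s := hu ▸ syndrome_congr_inr hO fun _ => rfl
  have hlow : ρ ^ hammingNorm z' ≤ cosetWeight H ρ (Sum.elim 0 z') := by
    simpa using pow_gwFull_le_cosetWeight H hρ0.le (Sum.elim 0 z')
  have hup : cosetWeight H ρ (Sum.elim x z) ≤ 2 ^ m * ρ ^ (hammingNorm z' + 1) := by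
    refine cosetWeight_le H hρ0.le hρ1 fun v hv => le_trans hlt ?_
    have hz : (fun j => v (Sum.inr j)) = z := funext (inr_eq_of_mem_cosetF hO hv)
    simpa [hz] using hammingNorm_inr_le_gwFull v
  have hstrict : 2 ^ m * ρ ^ (hammingNorm z' + 1) < ρ ^ hammingNorm z' := by
    rw [pow_succ, ← mul_assoc, mul_comm _ ρ, ← mul_assoc]
    exact mul_lt_of_lt_one_left (by positivity) (by linarith)
  linarith [hmax _ hs']

end CosetWeight

theorem qmld_reduces_to_qmepd_general {m n : ℕ}
    (H : Matrix (Fin m) (Fin n ⊕ Fin n) (ZMod 2))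
    (hO : ∀ i j, H i (Sum.inr j) = 0)
    (s : Fin m → ZMod 2) (ε : ℝ)
    (hε0 : 0 < ε) (hε1 : ε ≤ 3 / 4)
    (hεm : ε / 3 / (1 - ε) < ((2 : ℝ) ^ m)⁻¹)
    (x z : Fin n → ZMod 2)
    (hv : syndrome H (Sum.elim x z) = s)
    (hmax : ∀ w : Fin n ⊕ Fin n → ZMod 2, syndrome H w = s →
      alpha H ε w ≤ alpha H ε (Sum.elim x z)) :
    syndrome H (Sum.elim (0 : Fin n → ZMod 2) z) = s ∧
    gwFull (Sum.elim (0 : Fin n → ZMod 2) z) =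
      sInf (gwFull '' {u : Fin n ⊕ Fin n → ZMod 2 | syndrome H u = s}) := by
  have hb : 0 < 1 - ε := by linarith
  have hρ0 : 0 < ε / 3 / (1 - ε) := by positivity
  have hρ1 : ε / 3 / (1 - ε) ≤ 1 := (div_le_one hb).mpr (by linarith)
  have hρm : 2 ^ m * (ε / 3 / (1 - ε)) < 1 := by
    simpa using mul_lt_mul_of_pos_left hεm (by positivity : (0 : ℝ) < 2 ^ m)
  have hmax' : ∀ w, syndrome H w = s →
      cosetWeight H (ε / 3 / (1 - ε)) w ≤ cosetWeight H (ε / 3 / (1 - ε)) (Sum.elim x z) := by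
    intro w hw
    have := hmax w hw
    rwa [alpha_eq_mul_cosetWeight H hb.ne', alpha_eq_mul_cosetWeight H hb.ne',
      mul_le_mul_iff_right₀ (by positivity)] at this
  have hs0 : syndrome H (Sum.elim 0 z) = s := hv ▸ syndrome_congr_inr hO fun _ => rfl
  have hleast : IsLeast (gwFull '' {u | syndrome H u = s}) (gwFull (Sum.elim 0 z)) := by
    refine ⟨⟨_, hs0, rfl⟩, ?_⟩
    rintro _ ⟨u, hu, rfl⟩
    simpa using
      hammingNorm_le_gwFull_of_forall_cosetWeight_le H hO hρ0 hρ1 hρm hmax' hu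
  exact ⟨hs0, hleast.csInf_eq.symm⟩

/-- correctness of the reduction from QMLD to QMEPD: let
`H = [H_X | O]` have full row rank `m`, let `0 < ε ≤ 3/4` with
`(ε/3)/(1−ε) < 2^{-m}`.  If `v = (x|z)` satisfies `v Λ Hᵀ = s` and maximizes
`α_w` among all solutions `w` of `w Λ Hᵀ = s`, then `e' = (0|z)` satisfies
`e' Λ Hᵀ = s` and `gw(e') = min {gw(u) : u Λ Hᵀ = s}`. -/
theorem qmld_reduces_to_qmepd {m n : ℕ}
    (H : Matrix (Fin m) (Fin n ⊕ Fin n) (ZMod 2))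
    (hO : ∀ i j, H i (Sum.inr j) = 0)
    (hfull : LinearIndependent (ZMod 2) (fun i : Fin m => H i))
    (s : Fin m → ZMod 2) (ε : ℝ)
    (hε0 : 0 < ε) (hε1 : ε ≤ 3 / 4)
    (hεm : ε / 3 / (1 - ε) < ((2 : ℝ) ^ m)⁻¹)
    (x z : Fin n → ZMod 2)
    (hv : syndrome H (Sum.elim x z) = s)
    (hmax : ∀ w : Fin n ⊕ Fin n → ZMod 2, syndrome H w = s →
      alpha H ε w ≤ alpha H ε (Sum.elim x z)) :
    syndrome H (Sum.elim (0 : Fin n → ZMod 2) z) = s ∧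
    gwFull (Sum.elim (0 : Fin n → ZMod 2) z) =
      sInf (gwFull '' {u : Fin n ⊕ Fin n → ZMod 2 | syndrome H u = s}) :=
  qmld_reduces_to_qmepd_general H hO s ε hε0 hε1 hεm x z hv hmax
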